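/- arXiv:1202.5561 — 4 statements merged into one kernel-verified Lean document; each statement's English description precedes it below -/
import Mathlib

section
/- Let A and B be n×n real symmetric positive semidefinite matrices with A - B positive semidefinite. Then 0 ≤ det(A - B) ≤ ((det A)^{1/n} - (det B)^{1/n})^n. -/
/-!
The inequality is the Minkowski determinant inequality
`det X ^ (1/n) + det Y ^ (1/n) ≤ det (X + Y) ^ (1/n)` for positive semidefinite `X = A - B`
and `Y = B`. If `X + Y` is singular, a kernel vector `v` of `X + Y` has `vᴴ X v + vᴴ Y v = 0`
with both terms nonnegative, so `X` and `Y` are singular too. Otherwise a congruence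
`Pᴴ * (X + Y) * P = 1` scales all three determinants by the same factor and turns `Y` into
`1 - X`; with `X` diagonalised, the claim becomes AM-GM for the eigenvalues `μᵢ ∈ [0, 1]`:
`(∏ μᵢ) ^ (1/n) + (∏ (1 - μᵢ)) ^ (1/n) ≤ ∑ μᵢ / n + ∑ (1 - μᵢ) / n = 1`.
-/

open Finset Fintype
open scoped MatrixOrder ComplexOrder

theorem Real.prod_rpow_add_prod_one_sub_rpow_le_one {ι : Type*} [Fintype ι] [Nonempty ι]
    {x : ι → ℝ} (h0 : ∀ i, 0 ≤ x i) (h1 : ∀ i, x i ≤ 1) :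
    (∏ i, x i) ^ (card ι : ℝ)⁻¹ + (∏ i, (1 - x i)) ^ (card ι : ℝ)⁻¹ ≤ 1 := by
  have h1' : ∀ i, 0 ≤ 1 - x i := fun i => sub_nonneg.mpr (h1 i)
  have hw : ∑ _i : ι, (card ι : ℝ)⁻¹ = 1 := by simp
  have amgm {z : ι → ℝ} (hz : ∀ i, 0 ≤ z i) :
      (∏ i, z i) ^ (card ι : ℝ)⁻¹ ≤ ∑ i, (card ι : ℝ)⁻¹ * z i := by
    rw [← Real.finsetProd_rpow _ _ fun i _ => hz i]
    exact Real.geom_mean_le_arith_mean_weighted _ _ _ (fun _ _ => by positivity) hw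
      fun i _ => hz i
  calc _ ≤ ∑ i, (card ι : ℝ)⁻¹ * x i + ∑ i, (card ι : ℝ)⁻¹ * (1 - x i) :=
        add_le_add (amgm h0) (amgm h1')
    _ = 1 := by simp_rw [← sum_add_distrib, ← mul_add, add_sub_cancel, mul_one, hw]

namespace Matrix

variable {ι 𝕜 : Type*} [Fintype ι] [DecidableEq ι] [RCLike 𝕜]

theorem IsHermitian.det_one_sub {M : Matrix ι ι 𝕜} (hM : M.IsHermitian) :
    (1 - M).det = ∏ i, (1 - (hM.eigenvalues i : 𝕜)) := by
  simpa [eval_charpoly, Polynomial.eval_prod] using congrArg (Polynomial.eval 1) hM.charpoly_eq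

theorem IsHermitian.eigenvalues_le_one {M : Matrix ι ι 𝕜} (hM : M.IsHermitian)
    (h : (1 - M).PosSemidef) (i : ι) : hM.eigenvalues i ≤ 1 :=
  (CFC.le_one_iff M hM.isSelfAdjoint).mp (le_iff.mpr h) _ (hM.eigenvalues_mem_spectrum_real i)

theorem PosDef.exists_conjTranspose_mul_mul_eq_one {S : Matrix ι ι 𝕜} (hS : S.PosDef) :
    ∃ P : Matrix ι ι 𝕜, Pᴴ * S * P = 1 := by
  obtain ⟨b, hb, rfl⟩ := CStarAlgebra.isStrictlyPositive_iff_eq_star_mul_self.mp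
    hS.isStrictlyPositive
  have hbb : b * b⁻¹ = 1 := mul_nonsing_inv b ((isUnit_iff_isUnit_det b).mp hb)
  refine ⟨b⁻¹, ?_⟩
  rw [star_eq_conjTranspose, ← mul_assoc, ← conjTranspose_mul, mul_assoc, hbb,
    conjTranspose_one, one_mul]

theorem PosSemidef.det_eq_zero_of_det_add_eq_zero {X Y : Matrix ι ι 𝕜} (hX : X.PosSemidef)
    (hY : Y.PosSemidef) (h : (X + Y).det = 0) : X.det = 0 := by
  obtain ⟨v, hv, hXYv⟩ := exists_mulVec_eq_zero_iff.mpr h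
  have hsum : star v ⬝ᵥ X *ᵥ v + star v ⬝ᵥ Y *ᵥ v = 0 := by
    rw [← dotProduct_add, ← add_mulVec, hXYv, dotProduct_zero]
  have hXv : star v ⬝ᵥ X *ᵥ v = 0 :=
    ((add_eq_zero_iff_of_nonneg (hX.dotProduct_mulVec_nonneg v)
      (hY.dotProduct_mulVec_nonneg v)).mp hsum).1
  exact exists_mulVec_eq_zero_iff.mp ⟨v, hv, (hX.dotProduct_mulVec_zero_iff v).mp hXv⟩

variable [Nonempty ι]

theorem PosSemidef.det_rpow_add_det_one_sub_rpow_le_one {M : Matrix ι ι ℝ} (hM : M.PosSemidef)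
    (h : (1 - M).PosSemidef) : M.det ^ (card ι : ℝ)⁻¹ + (1 - M).det ^ (card ι : ℝ)⁻¹ ≤ 1 := by
  rw [hM.isHermitian.det_eq_prod_eigenvalues, hM.isHermitian.det_one_sub]
  exact Real.prod_rpow_add_prod_one_sub_rpow_le_one hM.eigenvalues_nonneg
    (hM.isHermitian.eigenvalues_le_one h)

theorem PosSemidef.det_rpow_add_det_rpow_le {X Y : Matrix ι ι ℝ} (hX : X.PosSemidef)
    (hY : Y.PosSemidef) :
    X.det ^ (card ι : ℝ)⁻¹ + Y.det ^ (card ι : ℝ)⁻¹ ≤ (X + Y).det ^ (card ι : ℝ)⁻¹ := by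
  set r : ℝ := (card ι : ℝ)⁻¹
  by_cases hS : (X + Y).det = 0
  · have hr : r ≠ 0 := inv_ne_zero (Nat.cast_ne_zero.mpr card_ne_zero)
    rw [hX.det_eq_zero_of_det_add_eq_zero hY hS,
      hY.det_eq_zero_of_det_add_eq_zero hX (by rwa [add_comm]), hS, Real.zero_rpow hr, add_zero]
  obtain ⟨P, hP⟩ :=
    ((hX.add hY).posDef_iff_det_ne_zero.mpr hS).exists_conjTranspose_mul_mul_eq_one
  have hdet (Z : Matrix ι ι ℝ) : Z.det = (X + Y).det * (Pᴴ * Z * P).det := by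
    have h := congrArg det hP
    simp only [det_mul, det_one] at h ⊢
    linear_combination -Z.det * h
  have hN : Pᴴ * Y * P = 1 - Pᴴ * X * P := by
    rw [← hP, Matrix.mul_add, Matrix.add_mul, add_sub_cancel_left]
  have key := (hX.conjTranspose_mul_mul_same P).det_rpow_add_det_one_sub_rpow_le_one
    (hN ▸ hY.conjTranspose_mul_mul_same P)
  rw [← hN] at key
  have hS0 := (hX.add hY).det_nonneg
  rw [hdet X, hdet Y, Real.mul_rpow hS0 (hX.conjTranspose_mul_mul_same P).det_nonneg,
    Real.mul_rpow hS0 (hY.conjTranspose_mul_mul_same P).det_nonneg, ← mul_add]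
  exact mul_le_of_le_one_right (by positivity) key

end Matrix

theorem stmt1_general (n : ℕ) (hn : 0 < n) (A B : Matrix (Fin n) (Fin n) ℝ)
    (hBpsd : B.PosSemidef) (hABpsd : (A - B).PosSemidef) :
    0 ≤ (A - B).det ∧
      (A - B).det ≤ (A.det ^ (1 / (n : ℝ)) - B.det ^ (1 / (n : ℝ))) ^ n := by
  have : NeZero n := ⟨hn.ne'⟩
  have hmink := hABpsd.det_rpow_add_det_rpow_le hBpsd
  rw [sub_add_cancel, Fintype.card_fin] at hmink
  refine ⟨hABpsd.det_nonneg, ?_⟩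
  simp only [one_div]
  calc (A - B).det = ((A - B).det ^ (n : ℝ)⁻¹) ^ n :=
        (Real.rpow_inv_natCast_pow hABpsd.det_nonneg hn.ne').symm
    _ ≤ _ := pow_le_pow_left₀ (Real.rpow_nonneg hABpsd.det_nonneg _)
        (le_sub_right_of_add_le hmink) n

theorem stmt1 (n : ℕ) (hn : 0 < n) (A B : Matrix (Fin n) (Fin n) ℝ)
    (hA : A.IsSymm) (hB : B.IsSymm)
    (hBpsd : B.PosSemidef) (hABpsd : (A - B).PosSemidef) :
    0 ≤ (A - B).det ∧
      (A - B).det ≤ (A.det ^ (1 / (n : ℝ)) - B.det ^ (1 / (n : ℝ))) ^ n :=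
  stmt1_general n hn A B hBpsd hABpsd
end

section
/- The map M ↦ (det M)^{1/n} is concave on the cone of n×n real symmetric positive semidefinite matrices: for all such A, B and t ∈ [0,1], (det(tA + (1-t)B))^{1/n} ≥ t(det A)^{1/n} + (1-t)(det B)^{1/n}. -/
/-!
By homogeneity of `det ^ (1 / n)`, concavity is Minkowski's determinant inequality
`det A ^ (1 / n) + det B ^ (1 / n) ≤ det (A + B) ^ (1 / n)`. When `A + B` is positive definite,
conjugating by `(A + B) ^ (-1 / 2)` reduces it to the case `A + B = 1`, where AM-GM on the
eigenvalues gives `det A ^ (1 / n) + det B ^ (1 / n) ≤ (tr A + tr B) / n = 1`. When `A + B` is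
singular, so are `A` and `B`, since a positive definite summand would make the sum positive
definite.
-/

open Matrix

namespace Matrix

variable {ι : Type*} [Fintype ι] [DecidableEq ι]

lemma PosSemidef.det_rpow_le_trace_div [Nonempty ι] {M : Matrix ι ι ℝ} (hM : M.PosSemidef) :
    M.det ^ (1 / (Fintype.card ι : ℝ)) ≤ M.trace / Fintype.card ι := by
  have amgm := Real.geom_mean_le_arith_mean Finset.univ (fun _ ↦ 1) hM.1.eigenvalues
    (fun _ _ ↦ zero_le_one) (by simpa using Fintype.card_pos)
    (fun i _ ↦ hM.eigenvalues_nonneg i)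
  simpa [hM.1.det_eq_prod_eigenvalues, hM.1.trace_eq_sum_eigenvalues] using amgm

lemma PosSemidef.det_rpow_add_det_rpow_le_one [Nonempty ι] {X Y : Matrix ι ι ℝ}
    (hX : X.PosSemidef) (hY : Y.PosSemidef) (hXY : X + Y = 1) :
    X.det ^ (1 / (Fintype.card ι : ℝ)) + Y.det ^ (1 / (Fintype.card ι : ℝ)) ≤ 1 := by
  have htrace : X.trace + Y.trace = Fintype.card ι := by
    rw [← trace_add, hXY, trace_one]
  calc _ ≤ X.trace / Fintype.card ι + Y.trace / Fintype.card ι :=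
        add_le_add hX.det_rpow_le_trace_div hY.det_rpow_le_trace_div
    _ = 1 := by rw [← add_div, htrace, div_self (by positivity)]

lemma det_smul_rpow_one_div_card [Nonempty ι] {c : ℝ} (hc : 0 ≤ c) {M : Matrix ι ι ℝ}
    (hM : 0 ≤ M.det) :
    (c • M).det ^ (1 / (Fintype.card ι : ℝ)) = c * M.det ^ (1 / (Fintype.card ι : ℝ)) := by
  rw [det_smul, Real.mul_rpow (by positivity) hM, ← Real.rpow_natCast,
    ← Real.rpow_mul hc, mul_one_div_cancel (by positivity), Real.rpow_one]

open scoped MatrixOrder in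
lemma PosSemidef.det_rpow_add_le_of_posDef_add [Nonempty ι] {A B : Matrix ι ι ℝ}
    (hA : A.PosSemidef) (hB : B.PosSemidef) (hAB : (A + B).PosDef) :
    A.det ^ (1 / (Fintype.card ι : ℝ)) + B.det ^ (1 / (Fintype.card ι : ℝ)) ≤
      (A + B).det ^ (1 / (Fintype.card ι : ℝ)) := by
  set p := 1 / (Fintype.card ι : ℝ)
  set S := CFC.sqrt (A + B)
  have hS : S.PosSemidef := (CFC.sqrt_nonneg _).posSemidef
  have hSS : S * S = A + B := CFC.sqrt_mul_sqrt_self _ hAB.posSemidef.nonneg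
  have hSunit : IsUnit S.det := by
    rw [isUnit_iff_ne_zero]
    intro h
    exact hAB.det_pos.ne' (by rw [← hSS, det_mul, h, zero_mul])
  set T := S⁻¹
  have hT : Tᴴ = T := by rw [conjTranspose_nonsing_inv, hS.1.eq]
  have conj_inv_sqrt {M : Matrix ι ι ℝ} (hM : M.PosSemidef) :
      (T * M * T).PosSemidef ∧ M.det ^ p = (A + B).det ^ p * (T * M * T).det ^ p := by
    have hTMT : (T * M * T).PosSemidef := by simpa only [hT] using hM.mul_mul_conjTranspose_same T
    have hM_eq : S * (T * M * T) * S = M := by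
      rw [show S * (T * M * T) * S = (S * T) * M * (T * S) by simp only [Matrix.mul_assoc],
        mul_nonsing_inv S hSunit, nonsing_inv_mul S hSunit, Matrix.one_mul, Matrix.mul_one]
    have hdet : M.det = (A + B).det * (T * M * T).det := by
      conv_lhs => rw [← hM_eq]
      simp only [← hSS, det_mul]
      ring
    exact ⟨hTMT, by rw [hdet, Real.mul_rpow hAB.det_pos.le hTMT.det_nonneg]⟩
  obtain ⟨hX, hdetA⟩ := conj_inv_sqrt hA
  obtain ⟨hY, hdetB⟩ := conj_inv_sqrt hB
  have hXY : T * A * T + T * B * T = 1 := by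
    rw [← Matrix.add_mul, ← Matrix.mul_add, ← hSS,
      show T * (S * S) * T = (T * S) * (S * T) by simp only [Matrix.mul_assoc],
      mul_nonsing_inv S hSunit, nonsing_inv_mul S hSunit, Matrix.one_mul]
  calc A.det ^ p + B.det ^ p
      = (A + B).det ^ p * ((T * A * T).det ^ p + (T * B * T).det ^ p) := by
        rw [hdetA, hdetB, mul_add]
    _ ≤ (A + B).det ^ p :=
        mul_le_of_le_one_right (Real.rpow_nonneg hAB.det_pos.le _)
          (hX.det_rpow_add_det_rpow_le_one hY hXY)

lemma PosSemidef.det_eq_zero_of_det_add_eq_zero_s2 {A B : Matrix ι ι ℝ} (hA : A.PosSemidef)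
    (hB : B.PosSemidef) (hAB : (A + B).det = 0) : A.det = 0 := by
  by_contra hA0
  exact ((hA.posDef_iff_det_ne_zero.mpr hA0).add_posSemidef hB).det_pos.ne' hAB

lemma PosSemidef.det_rpow_add_le [Nonempty ι] {A B : Matrix ι ι ℝ}
    (hA : A.PosSemidef) (hB : B.PosSemidef) :
    A.det ^ (1 / (Fintype.card ι : ℝ)) + B.det ^ (1 / (Fintype.card ι : ℝ)) ≤
      (A + B).det ^ (1 / (Fintype.card ι : ℝ)) := by
  by_cases hAB : (A + B).det = 0
  · have hp : 1 / (Fintype.card ι : ℝ) ≠ 0 := by positivity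
    rw [hA.det_eq_zero_of_det_add_eq_zero_s2 hB hAB,
      hB.det_eq_zero_of_det_add_eq_zero_s2 hA (add_comm A B ▸ hAB), hAB, Real.zero_rpow hp, add_zero]
  · exact hA.det_rpow_add_le_of_posDef_add hB ((hA.add hB).posDef_iff_det_ne_zero.mpr hAB)

end Matrix

theorem stmt2_general (n : ℕ) (hn : 0 < n) (A B : Matrix (Fin n) (Fin n) ℝ)
    (hApsd : A.PosSemidef) (hBpsd : B.PosSemidef)
    (t : ℝ) (ht : t ∈ Set.Icc (0 : ℝ) 1) :
    t * A.det ^ (1 / (n : ℝ)) + (1 - t) * B.det ^ (1 / (n : ℝ)) ≤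
      (t • A + (1 - t) • B).det ^ (1 / (n : ℝ)) := by
  have : Nonempty (Fin n) := Fin.pos_iff_nonempty.mp hn
  obtain ⟨ht0, ht1⟩ := ht
  have ht1' : 0 ≤ 1 - t := sub_nonneg.mpr ht1
  have key := (hApsd.smul ht0).det_rpow_add_le (hBpsd.smul ht1')
  rwa [det_smul_rpow_one_div_card ht0 hApsd.det_nonneg,
    det_smul_rpow_one_div_card ht1' hBpsd.det_nonneg, Fintype.card_fin] at key

theorem stmt2 (n : ℕ) (hn : 0 < n) (A B : Matrix (Fin n) (Fin n) ℝ)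
    (hA : A.IsSymm) (hB : B.IsSymm)
    (hApsd : A.PosSemidef) (hBpsd : B.PosSemidef)
    (t : ℝ) (ht : t ∈ Set.Icc (0 : ℝ) 1) :
    t * A.det ^ (1 / (n : ℝ)) + (1 - t) * B.det ^ (1 / (n : ℝ)) ≤
      (t • A + (1 - t) • B).det ^ (1 / (n : ℝ)) :=
  stmt2_general n hn A B hApsd hBpsd t ht
end

section
/- Let u : Ω → ℝ be a convex function on a convex open set Ω ⊂ ℝⁿ. Then the set of vectors p ∈ ℝⁿ that belong to the subdifferential of u at two distinct points of Ω has Lebesgue measure zero. -/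
/-!
If `p` is a subgradient of `u` at two distinct points `x ≠ y`, then both `x` and `y` are
subgradients at `p` of the Legendre transform `u*(p) = sup_z (⟪p, z⟫ - u z)`, so `u*` is not
differentiable at `p`. Restricting the supremum to the points `z` with `‖z‖ ≤ m` and `u z ≥ -m`
makes the transform finite and `m`-Lipschitz, so by Rademacher's theorem its points of
nondifferentiability form a null set; every such `p` is caught by one of these countably many
truncations.
-/

open Set MeasureTheory NNReal
open scoped RealInnerProductSpace

variable {E : Type*} [NormedAddCommGroup E] [InnerProductSpace ℝ E]

def HasSubgradientWithinAt (u : E → ℝ) (p : E) (s : Set E) (x : E) : Prop :=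
  ∀ z ∈ s, u x + ⟪p, z - x⟫ ≤ u z

theorem HasSubgradientWithinAt.mono {u : E → ℝ} {p x : E} {s t : Set E}
    (h : HasSubgradientWithinAt u p s x) (hts : t ⊆ s) : HasSubgradientWithinAt u p t x :=
  fun z hz => h z (hts hz)

theorem HasSubgradientWithinAt.fderiv_eq {f : E → ℝ} {p x : E}
    (h : HasSubgradientWithinAt f p univ x) (hd : DifferentiableAt ℝ f x) :
    fderiv ℝ f x = innerSL ℝ p := by
  have hmin : IsLocalMin (fun q => f q - ⟪p, q⟫) x :=
    IsMinOn.isLocalMin (s := univ) (fun q _ => by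
      have := h q (mem_univ q)
      rw [inner_sub_right] at this
      show f x - ⟪p, x⟫ ≤ f q - ⟪p, q⟫
      linarith) Filter.univ_mem
  exact sub_eq_zero.1 <|
    hmin.hasFDerivAt_eq_zero (hd.hasFDerivAt.sub (innerSL ℝ p).hasFDerivAt)

theorem HasSubgradientWithinAt.eq_of_differentiableAt {f : E → ℝ} {p q x : E}
    (hp : HasSubgradientWithinAt f p univ x) (hq : HasSubgradientWithinAt f q univ x)
    (hd : DifferentiableAt ℝ f x) : p = q :=
  innerSL_inj.1 ((hp.fderiv_eq hd).symm.trans (hq.fderiv_eq hd))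

noncomputable def conjugateOn (u : E → ℝ) (T : Set E) (p : E) : ℝ :=
  ⨆ z : T, ⟪p, (z : E)⟫ - u z

section conjugateOn

variable {u : E → ℝ} {T : Set E} {R : ℝ≥0}

theorem bddAbove_range_inner_sub (hT : T ⊆ Metric.closedBall 0 R) (hu : BddBelow (u '' T))
    (p : E) : BddAbove (range fun z : T => ⟪p, (z : E)⟫ - u z) := by
  obtain ⟨b, hb⟩ := hu
  refine ⟨‖p‖ * R - b, ?_⟩
  rintro _ ⟨⟨z, hz⟩, rfl⟩
  have hzR : ‖z‖ ≤ R := mem_closedBall_zero_iff.1 (hT hz)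
  have : ⟪p, z⟫ ≤ ‖p‖ * R :=
    (real_inner_le_norm p z).trans (mul_le_mul_of_nonneg_left hzR (norm_nonneg p))
  have : b ≤ u z := hb (mem_image_of_mem u hz)
  dsimp only
  linarith

theorem inner_sub_le_conjugateOn (hT : T ⊆ Metric.closedBall 0 R) (hu : BddBelow (u '' T))
    {z : E} (hz : z ∈ T) (p : E) : ⟪p, z⟫ - u z ≤ conjugateOn u T p :=
  le_ciSup (f := fun z : T => ⟪p, (z : E)⟫ - u z) (bddAbove_range_inner_sub hT hu p) ⟨z, hz⟩

theorem conjugateOn_eq_of_hasSubgradientWithinAt {p w : E} (hw : w ∈ T)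
    (h : HasSubgradientWithinAt u p T w) : conjugateOn u T p = ⟪p, w⟫ - u w := by
  have hle : ∀ z : T, ⟪p, (z : E)⟫ - u z ≤ ⟪p, w⟫ - u w := fun ⟨z, hz⟩ => by
    have := h z hz
    rw [inner_sub_right] at this
    linarith
  have : Nonempty T := ⟨⟨w, hw⟩⟩
  exact le_antisymm (ciSup_le hle)
    (le_ciSup (f := fun z : T => ⟪p, (z : E)⟫ - u z) ⟨_, forall_mem_range.2 hle⟩ ⟨w, hw⟩)

theorem HasSubgradientWithinAt.conjugateOn (hT : T ⊆ Metric.closedBall 0 R)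
    (hu : BddBelow (u '' T)) {p w : E} (hw : w ∈ T) (h : HasSubgradientWithinAt u p T w) :
    HasSubgradientWithinAt (conjugateOn u T) w univ p := by
  intro q _
  have := inner_sub_le_conjugateOn hT hu hw q
  rw [conjugateOn_eq_of_hasSubgradientWithinAt hw h, inner_sub_right, real_inner_comm p w,
    real_inner_comm q w]
  linarith

theorem lipschitzWith_conjugateOn (hT : T ⊆ Metric.closedBall 0 R) (hu : BddBelow (u '' T)) :
    LipschitzWith R (conjugateOn u T) := by
  refine LipschitzWith.of_le_add_mul R fun p q => ?_
  rcases isEmpty_or_nonempty T with hT₀ | hT₀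
  · simp only [conjugateOn, Real.iSup_of_isEmpty, zero_add]
    positivity
  refine ciSup_le fun ⟨z, hz⟩ => ?_
  have hzR : ‖z‖ ≤ R := mem_closedBall_zero_iff.1 (hT hz)
  have hpq : ⟪p, z⟫ - ⟪q, z⟫ ≤ R * dist p q := calc
    ⟪p, z⟫ - ⟪q, z⟫ = ⟪p - q, z⟫ := (inner_sub_left p q z).symm
    _ ≤ ‖p - q‖ * ‖z‖ := real_inner_le_norm _ _
    _ ≤ R * dist p q := by
      rw [dist_eq_norm, mul_comm]
      exact mul_le_mul_of_nonneg_right hzR (norm_nonneg _)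
  have := inner_sub_le_conjugateOn hT hu hz q
  dsimp only
  linarith

theorem not_differentiableAt_conjugateOn (hT : T ⊆ Metric.closedBall 0 R)
    (hu : BddBelow (u '' T)) {p x y : E} (hx : x ∈ T) (hy : y ∈ T) (hxy : x ≠ y)
    (hpx : HasSubgradientWithinAt u p T x) (hpy : HasSubgradientWithinAt u p T y) :
    ¬DifferentiableAt ℝ (conjugateOn u T) p := fun hd =>
  hxy ((hpx.conjugateOn hT hu hx).eq_of_differentiableAt (hpy.conjugateOn hT hu hy) hd)

end conjugateOn

theorem measure_setOf_hasSubgradientWithinAt_pair_eq_zero [FiniteDimensional ℝ E]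
    [MeasurableSpace E] [BorelSpace E] (μ : Measure E) [μ.IsAddHaarMeasure]
    (s : Set E) (u : E → ℝ) :
    μ {p | ∃ x ∈ s, ∃ y ∈ s, x ≠ y ∧
      HasSubgradientWithinAt u p s x ∧ HasSubgradientWithinAt u p s y} = 0 := by
  set T : ℕ → Set E := fun m => {z | z ∈ s ∧ ‖z‖ ≤ m ∧ -(m : ℝ) ≤ u z}
  have hTs (m : ℕ) : T m ⊆ s := fun z hz => hz.1
  have hTR (m : ℕ) : T m ⊆ Metric.closedBall 0 (m : ℝ≥0) := fun z hz =>
    mem_closedBall_zero_iff.2 (by exact_mod_cast hz.2.1)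
  have hTu (m : ℕ) : BddBelow (u '' T m) := ⟨-m, forall_mem_image.2 fun z hz => hz.2.2⟩
  have hcover : {p | ∃ x ∈ s, ∃ y ∈ s, x ≠ y ∧
      HasSubgradientWithinAt u p s x ∧ HasSubgradientWithinAt u p s y} ⊆
      ⋃ m : ℕ, {p | ¬DifferentiableAt ℝ (conjugateOn u (T m)) p} := by
    rintro p ⟨x, hx, y, hy, hxy, hpx, hpy⟩
    obtain ⟨m, hm⟩ := exists_nat_ge (max (max ‖x‖ (-u x)) (max ‖y‖ (-u y)))
    simp only [max_le_iff] at hm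
    exact mem_iUnion.2 ⟨m, not_differentiableAt_conjugateOn (hTR m) (hTu m)
      ⟨hx, hm.1.1, by linarith⟩ ⟨hy, hm.2.1, by linarith⟩ hxy
      (hpx.mono (hTs m)) (hpy.mono (hTs m))⟩
  refine measure_mono_null hcover (measure_iUnion_null fun m => ?_)
  exact ae_iff.1 (lipschitzWith_conjugateOn (hTR m) (hTu m)).ae_differentiableAt

theorem stmt7_general (n : ℕ) (Ω : Set (EuclideanSpace ℝ (Fin n)))
    (u : EuclideanSpace ℝ (Fin n) → ℝ) :
    volume {p : EuclideanSpace ℝ (Fin n) | ∃ x ∈ Ω, ∃ y ∈ Ω, x ≠ y ∧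
        (∀ z ∈ Ω, u x + (inner ℝ p (z - x) : ℝ) ≤ u z) ∧
        (∀ z ∈ Ω, u y + (inner ℝ p (z - y) : ℝ) ≤ u z)} = 0 :=
  measure_setOf_hasSubgradientWithinAt_pair_eq_zero volume Ω u

theorem stmt7 (n : ℕ) (Ω : Set (EuclideanSpace ℝ (Fin n)))
    (hΩo : IsOpen Ω) (hΩc : Convex ℝ Ω)
    (u : EuclideanSpace ℝ (Fin n) → ℝ) (hu : ConvexOn ℝ Ω u) :
    volume {p : EuclideanSpace ℝ (Fin n) | ∃ x ∈ Ω, ∃ y ∈ Ω, x ≠ y ∧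
        (∀ z ∈ Ω, u x + (inner ℝ p (z - x) : ℝ) ≤ u z) ∧
        (∀ z ∈ Ω, u y + (inner ℝ p (z - y) : ℝ) ≤ u z)} = 0 :=
  stmt7_general n Ω u
end

section
/- Let (X, μ) and (Y, ν) be finite measure spaces, T_k, T : X → Y measurable maps with (T_k)_#(f_k μ) = g_k ν and T_#(f μ) = g ν, where λ ≤ f_k, f ≤ Λ and λ ≤ g_k, g ≤ Λ for some 0 < λ ≤ Λ. If g ∘ T_k → g ∘ T in L¹(X, μ) and g_k → g in L¹(Y, ν), then g_k ∘ T_k → g ∘ T in L¹(X, μ). -/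
/-! Comparing `T_# μ` with `ν` through the densities, `λ • T_# μ ≤ T_#(f μ) = g ν ≤ Λ • ν`, so
`‖(g_k - g) ∘ T_k‖_{L¹(μ)} ≤ (Λ/λ) ‖g_k - g‖_{L¹(ν)}`; the triangle inequality through `g ∘ T_k`
finishes the proof. -/

open Set Filter Topology MeasureTheory
open scoped ENNReal

section

variable {X Y : Type*} [MeasurableSpace X] [MeasurableSpace Y] {μ : Measure X} {ν : Measure Y}

theorem smul_map_le_smul_of_map_withDensity {T : X → Y} (hT : Measurable T)
    {F : X → ℝ≥0∞} {G : Y → ℝ≥0∞} {a b : ℝ≥0∞}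
    (hpush : (μ.withDensity F).map T = ν.withDensity G) (ha : ∀ x, a ≤ F x) (hb : ∀ y, G y ≤ b) :
    a • μ.map T ≤ b • ν :=
  calc a • μ.map T = (μ.withDensity fun _ => a).map T := by
        rw [withDensity_const, Measure.map_smul]
    _ ≤ (μ.withDensity F).map T := Measure.map_mono (withDensity_mono (ae_of_all _ ha)) hT
    _ = ν.withDensity G := hpush
    _ ≤ ν.withDensity fun _ => b := withDensity_mono (ae_of_all _ hb)
    _ = b • ν := withDensity_const b

theorem integral_comp_le_div_mul_of_map_withDensity {T : X → Y} (hT : Measurable T)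
    {F : X → ℝ} {G : Y → ℝ} {lam Lam : ℝ} (hlam : 0 < lam) (hLam : 0 ≤ Lam)
    (hpush : (μ.withDensity fun x => ENNReal.ofReal (F x)).map T
        = ν.withDensity fun y => ENNReal.ofReal (G y))
    (hF : ∀ x, lam ≤ F x) (hG : ∀ y, G y ≤ Lam)
    {h : Y → ℝ} (hh : Measurable h) (h_nonneg : 0 ≤ h) (hh_int : Integrable h ν) :
    ∫ x, h (T x) ∂μ ≤ Lam / lam * ∫ y, h y ∂ν := by
  have hle := smul_map_le_smul_of_map_withDensity hT hpush
    (fun x => ENNReal.ofReal_le_ofReal (hF x)) (fun y => ENNReal.ofReal_le_ofReal (hG y))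
  have hmono := integral_mono_measure hle (ae_of_all _ h_nonneg)
    (hh_int.smul_measure ENNReal.ofReal_ne_top)
  rw [integral_smul_measure, integral_smul_measure,
    integral_map hT.aemeasurable hh.aestronglyMeasurable, ENNReal.toReal_ofReal hlam.le,
    ENNReal.toReal_ofReal hLam, smul_eq_mul, smul_eq_mul] at hmono
  rw [div_mul_eq_mul_div, le_div_iff₀ hlam]
  linarith

theorem integrable_comp_of_mem_Icc [IsFiniteMeasure μ] {φ : Y → ℝ} {S : X → Y}
    (hφ : Measurable φ) (hS : Measurable S) {a b : ℝ} (hab : ∀ y, φ y ∈ Icc a b) :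
    Integrable (fun x => φ (S x)) μ :=
  Integrable.of_mem_Icc a b (hφ.comp hS).aemeasurable (ae_of_all _ fun x => hab (S x))

theorem integral_abs_sub_le_add {u v w : X → ℝ}
    (hu : Integrable u μ) (hv : Integrable v μ) (hw : Integrable w μ) :
    ∫ x, |u x - w x| ∂μ ≤ ∫ x, |u x - v x| ∂μ + ∫ x, |v x - w x| ∂μ :=
  (integral_mono (hu.sub hw).abs ((hu.sub hv).abs.add (hv.sub hw).abs)
    fun _ => abs_sub_le _ _ _).trans_eq (integral_add (hu.sub hv).abs (hv.sub hw).abs)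

end

theorem stmt9_general {X Y : Type*} [MeasurableSpace X] [MeasurableSpace Y]
    (μ : Measure X) (ν : Measure Y) [IsFiniteMeasure μ] [IsFiniteMeasure ν]
    (T : ℕ → X → Y) (T₀ : X → Y)
    (hT : ∀ k, Measurable (T k)) (hT₀ : Measurable T₀)
    (f : ℕ → X → ℝ) (g : ℕ → Y → ℝ) (g₀ : Y → ℝ)
    (hg : ∀ k, Measurable (g k)) (hg₀ : Measurable g₀)
    (lam Lam : ℝ) (hlam : 0 < lam) (hlamLam : lam ≤ Lam)
    (hfb : ∀ k x, lam ≤ f k x ∧ f k x ≤ Lam)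
    (hgb : ∀ k y, lam ≤ g k y ∧ g k y ≤ Lam) (hg₀b : ∀ y, lam ≤ g₀ y ∧ g₀ y ≤ Lam)
    (hpush : ∀ k, (μ.withDensity (fun x => ENNReal.ofReal (f k x))).map (T k)
        = ν.withDensity (fun y => ENNReal.ofReal (g k y)))
    (hgT : Tendsto (fun k => ∫ x, |g₀ (T k x) - g₀ (T₀ x)| ∂μ) atTop (𝓝 0))
    (hgg : Tendsto (fun k => ∫ y, |g k y - g₀ y| ∂ν) atTop (𝓝 0)) :
    Tendsto (fun k => ∫ x, |g k (T k x) - g₀ (T₀ x)| ∂μ) atTop (𝓝 0) := by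
  have h_pull : ∀ k, ∫ x, |g k (T k x) - g₀ (T k x)| ∂μ ≤ Lam / lam * ∫ y, |g k y - g₀ y| ∂ν :=
    fun k => integral_comp_le_div_mul_of_map_withDensity (hT k) hlam (hlam.le.trans hlamLam)
      (hpush k) (fun x => (hfb k x).1) (fun y => (hgb k y).2) ((hg k).sub hg₀).abs
      (fun y => abs_nonneg _)
      ((integrable_comp_of_mem_Icc (hg k) measurable_id (hgb k)).sub
        (integrable_comp_of_mem_Icc hg₀ measurable_id hg₀b)).abs
  have h_tri : ∀ k, ∫ x, |g k (T k x) - g₀ (T₀ x)| ∂μ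
      ≤ ∫ x, |g k (T k x) - g₀ (T k x)| ∂μ + ∫ x, |g₀ (T k x) - g₀ (T₀ x)| ∂μ := fun k =>
    integral_abs_sub_le_add (integrable_comp_of_mem_Icc (hg k) (hT k) (hgb k))
      (integrable_comp_of_mem_Icc hg₀ (hT k) hg₀b) (integrable_comp_of_mem_Icc hg₀ hT₀ hg₀b)
  refine squeeze_zero (fun k => integral_nonneg fun x => abs_nonneg _)
    (fun k => (h_tri k).trans (add_le_add_left (h_pull k) _)) ?_
  simpa using (hgg.const_mul (Lam / lam)).add hgT

theorem stmt9 {X Y : Type*} [MeasurableSpace X] [MeasurableSpace Y]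
    (μ : Measure X) (ν : Measure Y) [IsFiniteMeasure μ] [IsFiniteMeasure ν]
    (T : ℕ → X → Y) (T₀ : X → Y)
    (hT : ∀ k, Measurable (T k)) (hT₀ : Measurable T₀)
    (f : ℕ → X → ℝ) (f₀ : X → ℝ) (g : ℕ → Y → ℝ) (g₀ : Y → ℝ)
    (hf : ∀ k, Measurable (f k)) (hf₀ : Measurable f₀)
    (hg : ∀ k, Measurable (g k)) (hg₀ : Measurable g₀)
    (lam Lam : ℝ) (hlam : 0 < lam) (hlamLam : lam ≤ Lam)
    (hfb : ∀ k x, lam ≤ f k x ∧ f k x ≤ Lam) (hf₀b : ∀ x, lam ≤ f₀ x ∧ f₀ x ≤ Lam)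
    (hgb : ∀ k y, lam ≤ g k y ∧ g k y ≤ Lam) (hg₀b : ∀ y, lam ≤ g₀ y ∧ g₀ y ≤ Lam)
    (hpush : ∀ k, (μ.withDensity (fun x => ENNReal.ofReal (f k x))).map (T k)
        = ν.withDensity (fun y => ENNReal.ofReal (g k y)))
    (hpush₀ : (μ.withDensity (fun x => ENNReal.ofReal (f₀ x))).map T₀
        = ν.withDensity (fun y => ENNReal.ofReal (g₀ y)))
    (hgT : Tendsto (fun k => ∫ x, |g₀ (T k x) - g₀ (T₀ x)| ∂μ) atTop (𝓝 0))
    (hgg : Tendsto (fun k => ∫ y, |g k y - g₀ y| ∂ν) atTop (𝓝 0)) :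
    Tendsto (fun k => ∫ x, |g k (T k x) - g₀ (T₀ x)| ∂μ) atTop (𝓝 0) :=
  stmt9_general μ ν T T₀ hT hT₀ f g g₀ hg hg₀ lam Lam hlam hlamLam hfb hgb hg₀b hpush hgT hgg
end
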